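/- arXiv:2203.06526 — 2 statements merged into one kernel-verified Lean document; each statement's English description precedes it below -/
import Mathlib

section
/- Let N_l, P, and k be positive integers, and let ⌈x⌉ denote the least integer greater than or equal to x. Then the ratio of the number of reaction-diffusion solves to the number of micro problems in the parareal algorithm with re-usage of growth values satisfies the bound (k·(N_l + ⌈N_l/P⌉) + P) / ((k+1)·P + k·⌈N_l/P⌉) ≤ √(N_l)/2 + 1. -/
/-- The ratio of the number of reaction-diffusion solves to the number of micro
problems in the parareal algorithm with re-usage of growth values satisfies
`(k·(N_l + ⌈N_l/P⌉) + P) / ((k+1)·P + k·⌈N_l/P⌉) ≤ √(N_l)/2 + 1`. -/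
theorem parareal_reusage_ratio_bound (Nl P k : ℕ) (hNl : 0 < Nl) (hP : 0 < P) (hk : 0 < k) :
    ((k : ℝ) * ((Nl : ℝ) + (⌈(Nl : ℝ) / (P : ℝ)⌉ : ℝ)) + (P : ℝ)) /
        (((k : ℝ) + 1) * (P : ℝ) + (k : ℝ) * (⌈(Nl : ℝ) / (P : ℝ)⌉ : ℝ)) ≤
      Real.sqrt (Nl : ℝ) / 2 + 1 := by
  have hPpos : (0:ℝ) < P := by exact_mod_cast hP
  have hNpos : (0:ℝ) < Nl := by exact_mod_cast hNl
  have hkpos : (1:ℝ) ≤ k := by exact_mod_cast hk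
  set c : ℝ := (⌈(Nl : ℝ) / (P : ℝ)⌉ : ℝ) with hc
  have hle : (Nl:ℝ) / P ≤ c := Int.le_ceil _
  have hc0 : 0 < c := lt_of_lt_of_le (div_pos hNpos hPpos) hle
  have hNPc : (Nl:ℝ) ≤ P * c := by
    rw [div_le_iff₀ hPpos] at hle; linarith [hle]
  set s := Real.sqrt (Nl:ℝ) with hs
  have hs0 : 0 ≤ s := Real.sqrt_nonneg _
  have hs2 : s ^ 2 = (Nl:ℝ) := Real.sq_sqrt hNpos.le
  have hsqrtPc : s ≤ Real.sqrt (P * c) := Real.sqrt_le_sqrt hNPc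
  have hPc2 : Real.sqrt (P * c) ^ 2 = P * c :=
    Real.sq_sqrt (by positivity)
  have hamgm : 2 * Real.sqrt (P * c) ≤ P + c := by
    nlinarith [sq_nonneg (Real.sqrt (P*c)) , sq_nonneg ((P:ℝ) - c), hPc2,
      sq_nonneg (Real.sqrt (P*c) * 2 - (P + c)), Real.sqrt_nonneg ((P:ℝ)*c)]
  have h4 : 2 * s ≤ (P:ℝ) + c := le_trans (by linarith) hamgm
  have hD : 0 < ((k:ℝ) + 1) * P + k * c := by positivity
  rw [div_le_iff₀ hD]
  have key : (k:ℝ) * (Nl:ℝ) ≤ (s / 2) * (((k:ℝ) + 1) * P + k * c) := by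
    nlinarith [mul_le_mul_of_nonneg_left h4 (by positivity : (0:ℝ) ≤ (k:ℝ) * s / 2),
      hs2, hs0, hPpos]
  nlinarith [key, hc0, hPpos, hkpos]
end

section
/- Let α > 0 and σ₀ ≠ 0 be real numbers, let s : [0, ∞) → ℝ be a continuous function with s(t) ≥ 0 for all t, and let c : [0, ∞) → ℝ be differentiable with c(0) = 0, 1 + c(t) > 0 and c′(t) = α · (1 + c(t))⁻¹ · (1 + s(t)/σ₀²)⁻¹ for all t ≥ 0. Then c is nondecreasing, c(t) ≥ 0 for all t ≥ 0, and c(t) ≤ √(1 + 2·α·t) − 1 for all t ≥ 0. -/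
/-- If `c(0) = 0` and `c′(t) = α·(1+c(t))⁻¹·(1+s(t)/σ₀²)⁻¹` on `[0,∞)` with
`s` continuous and nonnegative, `1 + c(t) > 0`, `α > 0`, `σ₀ ≠ 0`, then `c` is
nondecreasing, nonnegative, and `c(t) ≤ √(1 + 2αt) − 1` on `[0,∞)`. -/
theorem foam_cell_concentration_bound (α σ0 : ℝ) (hα : 0 < α) (hσ0 : σ0 ≠ 0)
    (s c : ℝ → ℝ)
    (hs_cont : ContinuousOn s (Set.Ici (0 : ℝ)))
    (hs_nonneg : ∀ t ∈ Set.Ici (0 : ℝ), 0 ≤ s t)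
    (hc0 : c 0 = 0)
    (hcpos : ∀ t ∈ Set.Ici (0 : ℝ), 0 < 1 + c t)
    (hderiv : ∀ t ∈ Set.Ici (0 : ℝ),
      HasDerivWithinAt c (α * (1 + c t)⁻¹ * (1 + s t / σ0 ^ 2)⁻¹) (Set.Ici (0 : ℝ)) t) :
    MonotoneOn c (Set.Ici (0 : ℝ))
    ∧ (∀ t ∈ Set.Ici (0 : ℝ), 0 ≤ c t)
    ∧ (∀ t ∈ Set.Ici (0 : ℝ), c t ≤ Real.sqrt (1 + 2 * α * t) - 1) := by
  have hσ2 : 0 < σ0 ^ 2 := by positivity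
  have hInt : interior (Set.Ici (0:ℝ)) ⊆ Set.Ici (0:ℝ) := interior_subset
  have hden : ∀ t ∈ Set.Ici (0:ℝ), (0:ℝ) < 1 + s t / σ0 ^ 2 := by
    intro t ht
    have := hs_nonneg t ht
    positivity
  have hccont : ContinuousOn c (Set.Ici (0:ℝ)) := fun t ht =>
    (hderiv t ht).continuousWithinAt
  have hmono : MonotoneOn c (Set.Ici (0:ℝ)) := by
    apply monotoneOn_of_hasDerivWithinAt_nonneg (convex_Ici 0) hccont
      (f' := fun t => α * (1 + c t)⁻¹ * (1 + s t / σ0 ^ 2)⁻¹)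
    · intro t ht
      exact (hderiv t (hInt ht)).mono hInt
    · intro t ht
      have h1 := hcpos t (hInt ht)
      have h2 := hden t (hInt ht)
      positivity
  refine ⟨hmono, ?_, ?_⟩
  · intro t ht
    have := hmono (Set.self_mem_Ici) ht ht
    simpa [hc0] using this
  · -- bound via h t = 1 + 2αt - (1+c t)^2 monotone
    intro t ht
    set h : ℝ → ℝ := fun u => 1 + 2 * α * u - (1 + c u) ^ 2 with hh
    have hmonoh : MonotoneOn h (Set.Ici (0:ℝ)) := by
      apply monotoneOn_of_hasDerivWithinAt_nonneg (convex_Ici 0)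
        (f' := fun u => 2 * α - 2 * α * (1 + s u / σ0 ^ 2)⁻¹)
      · apply ContinuousOn.sub
        · exact (continuousOn_const.add (continuousOn_const.mul continuousOn_id))
        · exact ((continuousOn_const.add hccont).pow 2)
      · intro u hu
        have hu' := hInt hu
        have hd1 : HasDerivWithinAt (fun u => 1 + 2 * α * u) (2 * α) (Set.Ici (0:ℝ)) u := by
          simpa using ((hasDerivWithinAt_id u (Set.Ici (0:ℝ))).const_mul (2*α)).const_add 1
        have hd2 : HasDerivWithinAt (fun u => (1 + c u) ^ 2)
            (2 * (1 + c u) ^ 1 * (α * (1 + c u)⁻¹ * (1 + s u / σ0 ^ 2)⁻¹))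
            (Set.Ici (0:ℝ)) u := by
          have := ((hderiv u hu').const_add 1).fun_pow 2
          simpa using this
        have key : (2:ℝ) * (1 + c u) ^ 1 * (α * (1 + c u)⁻¹ * (1 + s u / σ0 ^ 2)⁻¹)
            = 2 * α * (1 + s u / σ0 ^ 2)⁻¹ := by
          have hc1 := (hcpos u hu').ne'
          rw [pow_one, show 2 * (1 + c u) * (α * (1 + c u)⁻¹ * (1 + s u / σ0 ^ 2)⁻¹)
            = 2 * α * ((1 + c u) * (1 + c u)⁻¹) * (1 + s u / σ0 ^ 2)⁻¹ by ring,
            mul_inv_cancel₀ hc1, mul_one]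
        have := (hd1.sub hd2).mono hInt
        rw [key] at this
        exact this
      · intro u hu
        have hu' := hInt hu
        have h2 := hden u hu'
        have : (1 + s u / σ0 ^ 2)⁻¹ ≤ 1 := by
          apply inv_le_one_of_one_le₀
          have hs := hs_nonneg u hu'
          have : 0 ≤ s u / σ0 ^ 2 := by positivity
          linarith
        nlinarith
    have h0 : h 0 = 0 := by simp [hh, hc0]
    have hth : 0 ≤ h t := by
      have := hmonoh Set.self_mem_Ici ht ht
      rw [h0] at this; exact this
    have hsq : (1 + c t) ^ 2 ≤ 1 + 2 * α * t := by
      simp only [hh] at hth; linarith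
    have h1c : 0 ≤ 1 + c t := (hcpos t ht).le
    have hle : 1 + c t ≤ Real.sqrt (1 + 2 * α * t) := Real.le_sqrt_of_sq_le hsq
    linarith
end
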